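/- Let N_r ≥ 3 be an integer, set n = 2N_r, and define G_{n,k}(u) = ∑_{i=0}^{k−1} [n!·C(k−1,i)·(−1)^i / ((n−k+i+1)·(n−k)!·(k−1)!)] · u^{n−k+i+1}. Define Q_ORS(u) = [(N_r−1)/(2N_r−1)]·G_{n,2}(u) + [(N_r+2)/(2(2N_r−1))]·G_{n,3}(u) + ∑_{k=4}^{N_r+1} [2·N_r·C(N_r,k−1)/((2N_r−(k−1))·C(2N_r,k−1))]·G_{n,k}(u). Then lim_{u→0⁺} Q_ORS(u)/u^{N_r} = 2. -/

import Mathlib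

/-!
Since `k ≤ N_r + 1`, every `G_{2N_r,k}` occurring in `Q_ORS` is `u ^ (2N_r - k + 1)` times a
polynomial, so `Q_ORS(u) / u ^ N_r` extends continuously to `u = 0`. Only the term `k = N_r + 1`
has lowest degree exactly `N_r`; its lowest coefficient is `C(2N_r, N_r)`, which cancels against
its weight `2 / C(2N_r, N_r)`.
-/

/-- `G n k u = ∑_{i=0}^{k−1} n!·C(k−1,i)·(−1)^i / ((n−k+i+1)(n−k)!(k−1)!) · u^{n−k+i+1}`,
the CDF of the `k`-th largest of `n` i.i.d. random variables expressed as a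
polynomial in the common per-entry CDF value `u`. -/
noncomputable def orderCDF (n k : ℕ) (u : ℝ) : ℝ :=
  ∑ i ∈ Finset.range k,
    ((n.factorial : ℝ) * (((k - 1).choose i : ℝ)) * (-1 : ℝ) ^ i
        / (((n : ℝ) - (k : ℝ) + (i : ℝ) + 1) * ((n - k).factorial : ℝ)
            * ((k - 1).factorial : ℝ)))
      * u ^ (n - k + i + 1)

open Filter Topology Finset

noncomputable def orderCDFQuot (n k : ℕ) (u : ℝ) : ℝ :=
  ∑ i ∈ range k,
    ((n.factorial : ℝ) * (((k - 1).choose i : ℝ)) * (-1 : ℝ) ^ i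
        / (((n : ℝ) - (k : ℝ) + (i : ℝ) + 1) * ((n - k).factorial : ℝ)
            * ((k - 1).factorial : ℝ)))
      * u ^ i

lemma orderCDF_eq_pow_mul_orderCDFQuot (n k : ℕ) (u : ℝ) :
    orderCDF n k u = u ^ (n - k + 1) * orderCDFQuot n k u := by
  simp only [orderCDF, orderCDFQuot, mul_sum]
  refine sum_congr rfl fun i _ => ?_
  rw [add_right_comm, pow_add]
  ring

lemma continuous_orderCDFQuot (n k : ℕ) : Continuous (orderCDFQuot n k) := by
  unfold orderCDFQuot
  fun_prop

lemma orderCDFQuot_zero {n k : ℕ} (hk : 1 ≤ k) (hkn : k ≤ n) :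
    orderCDFQuot n k 0 = n.choose (k - 1) := by
  rw [orderCDFQuot, sum_eq_single_of_mem 0 (mem_range.mpr hk) fun i _ hi => by
    rw [zero_pow hi, mul_zero]]
  have hfact :
      ((n : ℝ) - k + (0 : ℕ) + 1) * ((n - k).factorial : ℝ) = (n - (k - 1)).factorial := by
    rw [show n - (k - 1) = n - k + 1 by omega, Nat.factorial_succ]
    push_cast [Nat.cast_sub hkn]
    ring
  rw [Nat.cast_choose ℝ (by omega : k - 1 ≤ n), hfact]
  simp only [Nat.choose_zero_right, Nat.cast_one, pow_zero, mul_one]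
  ring

lemma tendsto_orderCDF_div_pow {n k m : ℕ} (hm : m ≤ n - k + 1) :
    Tendsto (fun u => orderCDF n k u / u ^ m) (𝓝[≠] 0)
      (𝓝 (0 ^ (n - k + 1 - m) * orderCDFQuot n k 0)) := by
  have hcont : Continuous fun u : ℝ => u ^ (n - k + 1 - m) * orderCDFQuot n k u :=
    (continuous_pow _).mul (continuous_orderCDFQuot n k)
  refine (hcont.tendsto 0).mono_left nhdsWithin_le_nhds |>.congr' ?_
  filter_upwards [self_mem_nhdsWithin] with u (hu : u ≠ 0)
  rw [orderCDF_eq_pow_mul_orderCDFQuot, eq_div_iff (pow_ne_zero m hu), mul_right_comm,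
    ← pow_add, Nat.sub_add_cancel hm]

lemma tendsto_orderCDF_div_pow_of_lt {n k m : ℕ} (hm : m < n - k + 1) :
    Tendsto (fun u => orderCDF n k u / u ^ m) (𝓝[≠] 0) (𝓝 0) := by
  simpa [zero_pow (Nat.sub_ne_zero_of_lt hm)] using tendsto_orderCDF_div_pow hm.le

lemma tendsto_orderCDF_div_pow_lowest {n k : ℕ} (hk : 1 ≤ k) (hkn : k ≤ n) :
    Tendsto (fun u => orderCDF n k u / u ^ (n - k + 1)) (𝓝[≠] 0) (𝓝 (n.choose (k - 1))) := by
  simpa [orderCDFQuot_zero hk hkn] using tendsto_orderCDF_div_pow (n := n) (k := k) le_rfl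

/-- For `Nr ≥ 3`, the two-user ORS outage bound
`Q_ORS(u) = (Nr−1)/(2Nr−1)·G_{2Nr,2}(u) + (Nr+2)/(2(2Nr−1))·G_{2Nr,3}(u)
  + ∑_{k=4}^{Nr+1} 2·Nr·C(Nr,k−1)/((2Nr−(k−1))·C(2Nr,k−1))·G_{2Nr,k}(u)`
satisfies `lim_{u→0⁺} Q_ORS(u)/u^{Nr} = 2`. -/
theorem ORS_outage_bound_limit (Nr : ℕ) (hNr : 3 ≤ Nr) :
    Filter.Tendsto
      (fun u : ℝ =>
        (((Nr : ℝ) - 1) / (2 * (Nr : ℝ) - 1) * orderCDF (2 * Nr) 2 u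
          + ((Nr : ℝ) + 2) / (2 * (2 * (Nr : ℝ) - 1)) * orderCDF (2 * Nr) 3 u
          + ∑ k ∈ Finset.Icc 4 (Nr + 1),
              (2 * (Nr : ℝ) * (Nr.choose (k - 1) : ℝ))
                / ((2 * (Nr : ℝ) - ((k : ℝ) - 1)) * (((2 * Nr).choose (k - 1) : ℝ)))
                * orderCDF (2 * Nr) k u) / u ^ Nr)
      (nhdsWithin 0 (Set.Ioi 0)) (nhds 2) := by
  have hlow : ∀ k, k ≤ Nr → Tendsto (fun u => orderCDF (2 * Nr) k u / u ^ Nr) (𝓝[≠] 0) (𝓝 0) :=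
    fun k hk => tendsto_orderCDF_div_pow_of_lt (by omega)
  have htop : Tendsto (fun u => orderCDF (2 * Nr) (Nr + 1) u / u ^ Nr) (𝓝[≠] 0)
      (𝓝 ((2 * Nr).choose Nr)) := by
    simpa [show 2 * Nr - (Nr + 1) + 1 = Nr by omega] using
      tendsto_orderCDF_div_pow_lowest (n := 2 * Nr) (k := Nr + 1) (by omega) (by omega)
  have hmid (c : ℕ → ℝ) :
      Tendsto (fun u => ∑ k ∈ Icc 4 Nr, c k * (orderCDF (2 * Nr) k u / u ^ Nr)) (𝓝[≠] 0) (𝓝 0) := by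
    simpa using tendsto_finsetSum _ fun k hk => (hlow k (mem_Icc.mp hk).2).const_mul (c k)
  simp only [sum_Icc_succ_top (by omega : 4 ≤ Nr + 1), add_div, sum_div, mul_div_assoc]
  refine Tendsto.mono_left (x := 𝓝[≠] 0) ?_
    (nhdsWithin_mono 0 fun _ hu => (Set.mem_Ioi.mp hu).ne')
  convert (((hlow 2 (by omega)).const_mul _).add ((hlow 3 (by omega)).const_mul _)).add
    ((hmid _).add (htop.const_mul _)) using 2
  have hchoose : ((2 * Nr).choose Nr : ℝ) ≠ 0 := by
    exact_mod_cast (Nat.choose_pos (by omega : Nr ≤ 2 * Nr)).ne'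
  have hNr0 : (Nr : ℝ) ≠ 0 := by exact_mod_cast (by omega : Nr ≠ 0)
  simp only [mul_zero, zero_add, Nat.add_sub_cancel, Nat.choose_self]
  push_cast
  rw [add_sub_cancel_right, show 2 * (Nr : ℝ) - Nr = Nr by ring]
  field_simp
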